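/- Let ⟨G, h, g⟩ be a winning hat guessing game on a directed graph and let u→v be a directed edge of G. Then the game on G with the edge u→v removed, with the same hatness function h and with guessing function g' equal to g except g'(u) = g(u)·h(v), is winning. -/
import Mathlib


/-- Winning strategy for the hat game on a directed visibility graph: `E u v` means `u` sees `v`. -/
def DHatWinning {V : Type*} (E : V → V → Prop) (h g : V → ℕ) : Prop :=
  ∃ σ : V → (V → ℕ) → Finset ℕ,
    (∀ v c c', (∀ u, E v u → c u = c' u) → σ v c = σ v c') ∧
    (∀ v c, (σ v c).card ≤ g v) ∧
    ∀ c : V → ℕ, (∀ v, c v < h v) → ∃ v, c v ∈ σ v c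

/-- The directed hat game on the induced subgraph with vertex set `S`. -/
def DHatWinningOn {V : Type*} (E : V → V → Prop) (S : Set V) (h g : V → ℕ) : Prop :=
  ∃ σ : V → (V → ℕ) → Finset ℕ,
    (∀ v ∈ S, ∀ c c', (∀ u ∈ S, E v u → c u = c' u) → σ v c = σ v c') ∧
    (∀ v ∈ S, ∀ c, (σ v c).card ≤ g v) ∧
    ∀ c : V → ℕ, (∀ v ∈ S, c v < h v) → ∃ v ∈ S, c v ∈ σ v c

/-- half-edge removal. Removing a directed edge `u → v` from a winning game
preserves the winning property if `u`'s number of guesses is multiplied by `h v`. -/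
theorem half_edge_removal {V : Type*} [DecidableEq V] (E : V → V → Prop) (h g : V → ℕ)
    (u v : V) (huv : E u v) (hwin : DHatWinning E h g) :
    DHatWinning (fun x y => E x y ∧ ¬(x = u ∧ y = v)) h
      (fun x => if x = u then g u * h v else g x) := by

  obtain ⟨σ, hdep, hcard, hw⟩ := hwin
  refine ⟨fun w c => if w = u then
      (Finset.range (h v)).biUnion (fun b => σ u (Function.update c v b)) else σ w c,
    ?_, ?_, ?_⟩
  · intro w c c' hcc
    by_cases hwu : w = u
    · subst hwu
      simp only [if_pos rfl]
      apply Finset.biUnion_congr rfl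
      intro b _
      apply hdep
      intro x hx
      by_cases hxv : x = v
      · subst hxv; simp
      · rw [Function.update_of_ne hxv, Function.update_of_ne hxv]
        exact hcc x ⟨hx, fun ⟨_, h2⟩ => hxv h2⟩
    · simp only [if_neg hwu]
      exact hdep w c c' fun x hx => hcc x ⟨hx, fun ⟨h1, _⟩ => hwu h1⟩
  · intro w c
    by_cases hwu : w = u
    · simp only [if_pos hwu]
      calc ((Finset.range (h v)).biUnion (fun b => σ u (Function.update c v b))).card
          ≤ ∑ b ∈ Finset.range (h v), (σ u (Function.update c v b)).card :=
            Finset.card_biUnion_le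
        _ ≤ ∑ _b ∈ Finset.range (h v), g u := Finset.sum_le_sum fun b _ => hcard u _
        _ = g u * h v := by simp [Nat.mul_comm]
    · simp [hwu, hcard]
  · intro c hc
    obtain ⟨w, hwmem⟩ := hw c hc
    refine ⟨w, ?_⟩
    by_cases hwu : w = u
    · rw [hwu] at hwmem ⊢
      simp only [if_pos rfl]
      refine Finset.mem_biUnion.2 ⟨c v, Finset.mem_range.2 (hc v), ?_⟩
      rwa [Function.update_eq_self]
    · simpa [hwu] using hwmem
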